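/- Let 0 ≤ i₁ < i₂ < i₃ < i₄ be natural numbers and J = {i₁,i₂,i₃,i₄}. Then D_J is not the zero polynomial; its degree as a polynomial in x equals i₃ + i₄, and its order of vanishing at the origin (the smallest exponent with nonzero coefficient) equals i₁ + i₂. -/

import Mathlib

open Polynomial

/-- The 4×4 matrix `𝐌_J(x)` for `J = {a,b,c,d}` (columns in the given order),
whose column for exponent `i` is `(1, i, x^i, i·x^i)ᵀ`, and its determinant `D_J`. -/
noncomputable def Dfour (a b c d : ℕ) : Polynomial ℤ :=
  (Matrix.of fun r (j : Fin 4) =>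
    ![(1 : Polynomial ℤ), ((![a,b,c,d] j : ℕ) : Polynomial ℤ),
      X ^ (![a,b,c,d] j), ((![a,b,c,d] j : ℕ) : Polynomial ℤ) * X ^ (![a,b,c,d] j)] r).det

/-! For `a < b < c < d` the six exponents in the expansion of `D_J` satisfy
`a+b < a+c < a+d, b+c < b+d < c+d`, so the extreme monomials `X^(c+d)` and `X^(a+b)` occur
only once, both with coefficient `(b-a)(d-c) ≠ 0`. -/

lemma Dfour_eq (a b c d : ℕ) : Dfour a b c d =
    C (((b : ℤ) - a) * ((d : ℤ) - c)) * (X ^ (c + d) + X ^ (a + b))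
  - C (((c : ℤ) - a) * ((d : ℤ) - b)) * (X ^ (b + d) + X ^ (a + c))
  + C (((d : ℤ) - a) * ((c : ℤ) - b)) * (X ^ (b + c) + X ^ (a + d)) := by
  unfold Dfour
  simp [Matrix.det_succ_row_zero, Fin.sum_univ_succ, Fin.succAbove, Fin.castSucc,
    Fin.castAdd, Fin.castLE]
  ring

lemma coeff_Dfour (a b c d n : ℕ) : (Dfour a b c d).coeff n =
    ((b : ℤ) - a) * ((d : ℤ) - c) *
      ((if n = c + d then 1 else 0) + (if n = a + b then 1 else 0))
  - ((c : ℤ) - a) * ((d : ℤ) - b) *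
      ((if n = b + d then 1 else 0) + (if n = a + c then 1 else 0))
  + ((d : ℤ) - a) * ((c : ℤ) - b) *
      ((if n = b + c then 1 else 0) + (if n = a + d then 1 else 0)) := by
  simp only [Dfour_eq, coeff_add, coeff_sub, coeff_C_mul, coeff_X_pow]

section

variable {a b c d : ℕ} (hab : a < b) (hbc : b < c) (hcd : c < d)
include hab hbc hcd

lemma coeff_Dfour_add_top : (Dfour a b c d).coeff (c + d) = ((b : ℤ) - a) * ((d : ℤ) - c) := by
  rw [coeff_Dfour, if_pos rfl]
  repeat rw [if_neg (by omega)]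
  ring

lemma coeff_Dfour_add_bot : (Dfour a b c d).coeff (a + b) = ((b : ℤ) - a) * ((d : ℤ) - c) := by
  rw [coeff_Dfour, if_neg (by omega), if_pos rfl]
  repeat rw [if_neg (by omega)]
  ring

lemma coeff_Dfour_eq_zero {n : ℕ} (hn : n < a + b ∨ c + d < n) :
    (Dfour a b c d).coeff n = 0 := by
  rw [coeff_Dfour]
  repeat rw [if_neg (by omega)]
  ring

end

lemma sub_mul_sub_ne_zero {a b c d : ℕ} (hab : a < b) (hcd : c < d) :
    ((b : ℤ) - a) * ((d : ℤ) - c) ≠ 0 := by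
  have : (0 : ℤ) < ((b : ℤ) - a) * ((d : ℤ) - c) := by
    apply mul_pos <;> omega
  exact this.ne'

/-- for `i₁ < i₂ < i₃ < i₄`, the polynomial `D_J` is nonzero, has degree
`i₃ + i₄`, and its order of vanishing at the origin is `i₁ + i₂`. -/
theorem Dfour_ne_zero_degree_order (i₁ i₂ i₃ i₄ : ℕ)
    (h₁₂ : i₁ < i₂) (h₂₃ : i₂ < i₃) (h₃₄ : i₃ < i₄) :
    Dfour i₁ i₂ i₃ i₄ ≠ 0 ∧
    (Dfour i₁ i₂ i₃ i₄).natDegree = i₃ + i₄ ∧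
    (Dfour i₁ i₂ i₃ i₄).natTrailingDegree = i₁ + i₂ := by
  have hlead := coeff_Dfour_add_top h₁₂ h₂₃ h₃₄ ▸ sub_mul_sub_ne_zero h₁₂ h₃₄
  have htrail := coeff_Dfour_add_bot h₁₂ h₂₃ h₃₄ ▸ sub_mul_sub_ne_zero h₁₂ h₃₄
  have hD : Dfour i₁ i₂ i₃ i₄ ≠ 0 := fun h => hlead (by rw [h, coeff_zero])
  refine ⟨hD, natDegree_eq_of_le_of_coeff_ne_zero ?_ hlead,
    (natTrailingDegree_le_of_ne_zero htrail).antisymm ?_⟩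
  · exact natDegree_le_iff_coeff_eq_zero.mpr fun n hn =>
      coeff_Dfour_eq_zero h₁₂ h₂₃ h₃₄ (Or.inr hn)
  · exact le_natTrailingDegree hD fun n hn =>
      coeff_Dfour_eq_zero h₁₂ h₂₃ h₃₄ (Or.inl hn)
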